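/- The interrobang function is uniformly continuous on [0,1] ∩ ℚ, and hence extends uniquely to a continuous, strictly increasing function ‽ : [0,1] → ℝ. -/

import Mathlib

/-- The defining functional equations of the interrobang function on `[0,1] ∩ ℚ`. -/
def InterrobangEq (f : ℚ → ℝ) : Prop :=
  f 0 = 0 ∧
  (∀ x : ℚ, 0 < x → x ≤ 1/2 →
    f x = (4 : ℝ) ^ (-⌊(1/x : ℚ)⌋) * (1 - 2 * f (Int.fract (1/x)))) ∧
  (∀ x : ℚ, 1/2 < x → x ≤ 1 →
    f x = 3/8 - 3/4 * f (1/x - 1) - 1/2 * f (1 - x))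

/-!
On `ℚ ∩ [0,1]` the recursion replaces `x` by `fract (1/x)` or `1/x - 1`, whose denominator is
`x.num < x.den`, or by `1 - x`, which has the same denominator but lies in `[0, 1/2]`, where one
more step of the first rule applies. Strong induction on denominators therefore gives
`0 ≤ ‽ ≤ 3/8` and then strict monotonicity.

For continuity, say that `‽` has jump at most `B` at a real `z ∈ (0,1)` if `z` lies inside
rational brackets `a < z < b` with `‽ b - ‽ a` arbitrarily close to `B`. The first rule maps
brackets of `t` to brackets of `1/(n+t)`, scaling increments by `2·4^(-n) ≤ 1/8`; the second
combines brackets of `1/z - 1` and `1 - z` with weights `3/4` and `1/2`; at the points `1/n` the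
jump vanishes by direct computation. So a uniform bound `B` on the jumps improves to
`(3/4 + 1/2 · 1/8) B = 13/16 · B`, hence all jumps vanish. The supremum extension is then
continuous and strictly increasing, it is unique by density of `ℚ`, and `‽` is uniformly
continuous on `ℚ ∩ [0,1]` because `[0,1]` is compact.
-/

open Set Filter Topology

namespace Rat

theorem den_one_div_eq_num {x : ℚ} (hx : 0 < x) : ((1 / x).den : ℤ) = x.num := by
  rw [one_div, den_inv_of_ne_zero hx.ne', Int.natAbs_of_nonneg (num_pos.mpr hx).le]

theorem den_fract_one_div_eq_num {x : ℚ} (hx : 0 < x) :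
    ((Int.fract (1 / x)).den : ℤ) = x.num := by
  rw [den_intFract, den_one_div_eq_num hx]

theorem den_one_div_sub_one_eq_num {x : ℚ} (hx : 0 < x) : ((1 / x - 1).den : ℤ) = x.num := by
  rw [← den_one_div_eq_num hx, ← Int.cast_one, sub_intCast_den]

end Rat

section LinearOrderedField

variable {K : Type*} [Field K] [LinearOrder K] [IsStrictOrderedRing K] {x : K}

theorem two_le_floor_one_div [FloorRing K] (h0 : 0 < x) (h : x ≤ 1 / 2) : 2 ≤ ⌊1 / x⌋ := by
  rw [Int.le_floor, le_div_iff₀ h0]; push_cast; linarith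

theorem one_div_sub_one_mem_Ico (h : 1 / 2 < x) (h1 : x ≤ 1) : 1 / x - 1 ∈ Ico 0 1 :=
  ⟨by rw [sub_nonneg, le_div_iff₀ (by linarith)]; linarith,
    by rw [sub_lt_iff_lt_add, div_lt_iff₀ (by linarith)]; linarith⟩

theorem one_div_sub_one_mem_Ioo (h : 1 / 2 < x) (h1 : x < 1) : 1 / x - 1 ∈ Ioo 0 1 :=
  ⟨by rw [sub_pos, lt_div_iff₀ (by linarith)]; linarith, (one_div_sub_one_mem_Ico h h1.le).2⟩

end LinearOrderedField

theorem zpow_neg_le_one_sixteenth {n : ℤ} (hn : 2 ≤ n) : (4 : ℝ) ^ (-n) ≤ 1 / 16 := by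
  calc (4 : ℝ) ^ (-n) ≤ 4 ^ (-2 : ℤ) := zpow_le_zpow_right₀ (by norm_num) (by omega)
    _ = 1 / 16 := by norm_num

noncomputable def ratExtend (f : ℚ → ℝ) (z : ℝ) : ℝ :=
  sSup (f '' {q : ℚ | q ∈ Icc 0 1 ∧ (q : ℝ) ≤ z})

section ratExtend

variable {f : ℚ → ℝ} {z : ℝ}

theorem le_ratExtend (hf : MonotoneOn f (Icc 0 1)) {q : ℚ} (hq : q ∈ Icc 0 1)
    (hqz : (q : ℝ) ≤ z) : f q ≤ ratExtend f z := by
  refine le_csSup ⟨f 1, ?_⟩ ⟨q, ⟨hq, hqz⟩, rfl⟩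
  rintro _ ⟨p, ⟨hp, -⟩, rfl⟩
  exact hf hp ⟨zero_le_one, le_rfl⟩ hp.2

theorem ratExtend_le (hf : MonotoneOn f (Icc 0 1)) {q : ℚ} (hq : q ∈ Icc 0 1) (hz : 0 ≤ z)
    (hzq : z ≤ q) : ratExtend f z ≤ f q := by
  refine csSup_le ⟨f 0, 0, ⟨⟨le_rfl, zero_le_one⟩, by simpa using hz⟩, rfl⟩ ?_
  rintro _ ⟨p, ⟨hp, hpz⟩, rfl⟩
  exact hf hp hq (by exact_mod_cast hpz.trans hzq)

theorem ratExtend_ratCast (hf : MonotoneOn f (Icc 0 1)) {q : ℚ} (hq : q ∈ Icc 0 1) :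
    ratExtend f q = f q :=
  le_antisymm (ratExtend_le hf hq (by exact_mod_cast hq.1) le_rfl) (le_ratExtend hf hq le_rfl)

theorem strictMonoOn_ratExtend (hf : StrictMonoOn f (Icc 0 1)) :
    StrictMonoOn (ratExtend f) (Icc 0 1) := by
  intro x hx y hy hxy
  obtain ⟨p, hxp, hpy⟩ := exists_rat_btwn hxy
  obtain ⟨q, hpq, hqy⟩ := exists_rat_btwn hpy
  have hp : p ∈ Icc 0 1 :=
    ⟨by exact_mod_cast hx.1.trans hxp.le, by exact_mod_cast (hpy.trans_le hy.2).le⟩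
  have hq : q ∈ Icc 0 1 :=
    ⟨by exact_mod_cast hx.1.trans (hxp.trans hpq).le, by exact_mod_cast (hqy.trans_le hy.2).le⟩
  calc ratExtend f x ≤ f p := ratExtend_le hf.monotoneOn hp hx.1 hxp.le
    _ < f q := hf hp hq (by exact_mod_cast hpq)
    _ ≤ ratExtend f y := le_ratExtend hf.monotoneOn hq hqy.le

theorem continuousOn_ratExtend (hf : MonotoneOn f (Icc 0 1))
    (h : ∀ z ∈ Icc (0 : ℝ) 1, ∀ ε > 0, ∃ a b : ℚ, a ∈ Icc 0 1 ∧ b ∈ Icc 0 1 ∧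
      Icc (a : ℝ) b ∈ 𝓝[Icc 0 1] z ∧ f b - f a < ε) :
    ContinuousOn (ratExtend f) (Icc 0 1) := by
  intro z hz
  rw [ContinuousWithinAt, Metric.tendsto_nhds]
  intro ε hε
  obtain ⟨a, b, ha, hb, hab, hfab⟩ := h z hz ε hε
  have hbound : ∀ y ∈ Icc (0 : ℝ) 1, y ∈ Icc (a : ℝ) b →
      ratExtend f y ∈ Icc (f a) (f b) :=
    fun y hy hyab ↦ ⟨le_ratExtend hf ha hyab.1, ratExtend_le hf hb hy.1 hyab.2⟩
  have hz' := hbound z hz (mem_of_mem_nhdsWithin hz hab)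
  filter_upwards [self_mem_nhdsWithin, hab] with y hy hyab
  have hy' := hbound y hy hyab
  rw [Real.dist_eq, abs_lt]
  constructor <;> linarith [hy'.1, hy'.2, hz'.1, hz'.2]

end ratExtend

theorem eqOn_Icc_of_forall_ratCast_eq {g g' : ℝ → ℝ} (hg : ContinuousOn g (Icc 0 1))
    (hg' : ContinuousOn g' (Icc 0 1)) (h : ∀ q ∈ Icc (0 : ℚ) 1, g q = g' q) :
    EqOn g g' (Icc 0 1) := by
  refine EqOn.of_subset_closure (s := Ioo 0 1 ∩ range ((↑) : ℚ → ℝ)) ?_ hg hg'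
    (inter_subset_left.trans Ioo_subset_Icc_self) ?_
  · rintro _ ⟨hx, q, rfl⟩
    exact h q ⟨by exact_mod_cast hx.1.le, by exact_mod_cast hx.2.le⟩
  · calc Icc (0 : ℝ) 1 = closure (Ioo 0 1) := (closure_Ioo zero_ne_one).symm
      _ ⊆ closure (Ioo 0 1 ∩ range ((↑) : ℚ → ℝ)) :=
        closure_minimal (Rat.denseRange_cast.open_subset_closure_inter isOpen_Ioo)
          isClosed_closure

theorem uniformContinuousOn_of_continuousOn_extension {f : ℚ → ℝ} {g : ℝ → ℝ}
    (hg : ContinuousOn g (Icc 0 1)) (hgf : ∀ q ∈ Icc (0 : ℚ) 1, g q = f q) :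
    UniformContinuousOn f (Icc 0 1) := by
  refine ((isCompact_Icc.uniformContinuousOn_of_continuous hg).comp
    Rat.uniformContinuous_coe_real.uniformContinuousOn ?_).congr hgf
  exact fun q hq ↦ ⟨by exact_mod_cast hq.1, by exact_mod_cast hq.2⟩

def JumpLE (f : ℚ → ℝ) (B z : ℝ) : Prop :=
  ∀ ε > 0, ∃ a b : ℚ, 0 ≤ a ∧ b ≤ 1 ∧ (a : ℝ) < z ∧ z < b ∧ f b - f a < B + ε

namespace JumpLE

variable {f : ℚ → ℝ} {B z : ℝ}

theorem mono (h : JumpLE f B z) {C : ℝ} (hBC : B ≤ C) : JumpLE f C z := fun ε hε ↦ by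
  obtain ⟨a, b, ha, hb, haz, hzb, hab⟩ := h ε hε
  exact ⟨a, b, ha, hb, haz, hzb, by linarith⟩

theorem exists_bracket_within (hf : MonotoneOn f (Icc 0 1)) (h : JumpLE f B z) {lo hi ε : ℝ}
    (hlo : lo < z) (hhi : z < hi) (hε : 0 < ε) :
    ∃ a b : ℚ, 0 ≤ a ∧ b ≤ 1 ∧ lo < a ∧ (a : ℝ) < z ∧ z < b ∧ (b : ℝ) < hi ∧
      f b - f a < B + ε := by
  obtain ⟨a₀, b₀, ha₀, hb₀, ha₀z, hzb₀, hab₀⟩ := h ε hε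
  obtain ⟨a, ha, haz⟩ := exists_rat_btwn (max_lt ha₀z hlo)
  obtain ⟨b, hzb, hb⟩ := exists_rat_btwn (lt_min hzb₀ hhi)
  rw [max_lt_iff] at ha
  rw [lt_min_iff] at hb
  have ha₀a : a₀ ≤ a := by exact_mod_cast ha.1.le
  have hbb₀ : b ≤ b₀ := by exact_mod_cast hb.1.le
  have hab : a ≤ b := by exact_mod_cast (haz.trans hzb).le
  have hfa := hf ⟨ha₀, by linarith⟩ ⟨by linarith, by linarith⟩ ha₀a
  have hfb := hf ⟨by linarith, by linarith⟩ ⟨by linarith, hb₀⟩ hbb₀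
  exact ⟨a, b, by linarith, by linarith, ha.2, haz, hzb, hb.2, by linarith⟩

end JumpLE

namespace InterrobangEq

variable {f : ℚ → ℝ}

theorem apply_one_div_add (hf : InterrobangEq f) {n : ℤ} {u : ℚ} (hn : 2 ≤ n) (hu0 : 0 ≤ u)
    (hu1 : u < 1) : f (1 / (n + u)) = 4 ^ (-n) * (1 - 2 * f u) := by
  have hnu : (2 : ℚ) ≤ n + u := by
    have : (2 : ℚ) ≤ n := by exact_mod_cast hn
    linarith
  have hfloor : ⌊(n : ℚ) + u⌋ = n := by
    rw [Int.floor_intCast_add, Int.floor_eq_zero_iff.mpr ⟨hu0, hu1⟩, add_zero]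
  have hfract : Int.fract ((n : ℚ) + u) = u := by
    rw [Int.fract_intCast_add, Int.fract_eq_self.mpr ⟨hu0, hu1⟩]
  rw [hf.2.1 _ (by positivity) (by rw [div_le_div_iff₀ (by positivity) two_pos]; linarith),
    one_div_one_div, hfloor, hfract]

theorem apply_one_div (hf : InterrobangEq f) {n : ℤ} (hn : 2 ≤ n) : f (1 / n) = 4 ^ (-n) := by
  simpa [hf.1] using hf.apply_one_div_add hn le_rfl one_pos

theorem apply_one (hf : InterrobangEq f) : f 1 = 3 / 8 := by
  have := hf.2.2 1 (by norm_num) le_rfl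
  norm_num [hf.1] at this
  linarith

theorem mapsTo_Icc (hf : InterrobangEq f) : MapsTo f (Icc 0 1) (Icc 0 (3 / 8)) := by
  suffices ∀ N : ℕ, ∀ x : ℚ, x.den = N → x ∈ Icc 0 1 → f x ∈ Icc 0 (3 / 8) from
    fun x hx ↦ this _ x rfl hx
  intro N
  induction N using Nat.strong_induction_on with
  | _ N ih =>
  rintro x rfl ⟨hx0, hx1⟩
  have hle_half : ∀ y : ℚ, 0 < y → y ≤ 1 / 2 → y.den ≤ x.den →
      0 ≤ f y ∧ f y ≤ 1 / 16 := by
    intro y hy0 hy hyx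
    have hu := ih _ ?_ (Int.fract (1 / y)) rfl ⟨Int.fract_nonneg _, (Int.fract_lt_one _).le⟩
    · have hp : (0 : ℝ) < 4 ^ (-⌊1 / y⌋) := by positivity
      have hp16 := zpow_neg_le_one_sixteenth (two_le_floor_one_div hy0 hy)
      rw [hf.2.1 y hy0 hy]
      constructor <;> nlinarith [hu.1, hu.2]
    · have := Rat.den_fract_one_div_eq_num hy0
      have := Rat.num_lt_denom_iff.mpr (hy.trans_lt (by norm_num))
      omega
  rcases hx0.eq_or_lt with rfl | hx0
  · norm_num [hf.1]
  rcases le_or_gt x (1 / 2) with hx | hx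
  · have := hle_half x hx0 hx le_rfl
    constructor <;> linarith
  rcases hx1.eq_or_lt with rfl | hx1
  · norm_num [hf.apply_one]
  have hv := ih _ ?_ _ rfl (Ico_subset_Icc_self (one_div_sub_one_mem_Ico hx hx1.le))
  · have hw := hle_half (1 - x) (by linarith) (by linarith) (by simp)
    rw [hf.2.2 x hx hx1.le]
    constructor <;> linarith [hv.1, hv.2]
  · have := Rat.den_one_div_sub_one_eq_num hx0
    have := Rat.num_lt_denom_iff.mpr hx1
    omega

theorem le_zpow_of_le_half (hf : InterrobangEq f) {x : ℚ} (h0 : 0 < x) (h : x ≤ 1 / 2) :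
    f x ≤ 4 ^ (-⌊1 / x⌋) := by
  have hu := hf.mapsTo_Icc ⟨Int.fract_nonneg (1 / x), (Int.fract_lt_one (1 / x)).le⟩
  have hp : (0 : ℝ) < 4 ^ (-⌊1 / x⌋) := by positivity
  rw [hf.2.1 x h0 h]
  nlinarith [hu.1]

theorem le_one_sixteenth (hf : InterrobangEq f) {x : ℚ} (h0 : 0 ≤ x) (h : x ≤ 1 / 2) :
    f x ≤ 1 / 16 := by
  rcases h0.eq_or_lt with rfl | h0
  · rw [hf.1]; norm_num
  exact (hf.le_zpow_of_le_half h0 h).trans (zpow_neg_le_one_sixteenth (two_le_floor_one_div h0 h))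

theorem pos (hf : InterrobangEq f) {x : ℚ} (h0 : 0 < x) (h1 : x ≤ 1) : 0 < f x := by
  rcases le_or_gt x (1 / 2) with h | h
  · have hu := hf.mapsTo_Icc ⟨Int.fract_nonneg (1 / x), (Int.fract_lt_one (1 / x)).le⟩
    have hp : (0 : ℝ) < 4 ^ (-⌊1 / x⌋) := by positivity
    rw [hf.2.1 x h0 h]
    nlinarith [hu.2]
  · have hv := hf.mapsTo_Icc (Ico_subset_Icc_self (one_div_sub_one_mem_Ico h h1))
    have hw := hf.le_one_sixteenth (x := 1 - x) (by linarith) (by linarith)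
    rw [hf.2.2 x h h1]
    linarith [hv.2]

theorem lt_three_eighths (hf : InterrobangEq f) {x : ℚ} (h0 : 0 ≤ x) (h1 : x < 1) :
    f x < 3 / 8 := by
  rcases le_or_gt x (1 / 2) with h | h
  · linarith [hf.le_one_sixteenth h0 h]
  · have hv := hf.mapsTo_Icc (Ico_subset_Icc_self (one_div_sub_one_mem_Ico h h1.le))
    have hw := hf.pos (x := 1 - x) (by linarith) (by linarith)
    rw [hf.2.2 x h h1.le]
    linarith [hv.1]

theorem one_sixteenth_lt (hf : InterrobangEq f) {x : ℚ} (h : 1 / 2 < x) (h1 : x ≤ 1) :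
    1 / 16 < f x := by
  have hv := hf.lt_three_eighths (one_div_sub_one_mem_Ico h h1).1 (one_div_sub_one_mem_Ico h h1).2
  have hw := hf.le_one_sixteenth (x := 1 - x) (by linarith) (by linarith)
  rw [hf.2.2 x h h1]
  linarith

theorem lt_of_lt_of_le_half (hf : InterrobangEq f) {N : ℕ}
    (ih : ∀ x y : ℚ, x.den + y.den < N → 0 ≤ x → x < y → y ≤ 1 → f x < f y)
    {x y : ℚ} (hN : x.den + y.den ≤ N) (hx : 0 ≤ x) (hxy : x < y) (hy : y ≤ 1 / 2) :
    f x < f y := by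
  rcases hx.eq_or_lt with rfl | hx
  · rw [hf.1]; exact hf.pos hxy (by linarith)
  have hy0 : 0 < y := hx.trans hxy
  have hinv : 1 / y < 1 / x := one_div_lt_one_div_of_lt hx hxy
  have hux := hf.mapsTo_Icc ⟨Int.fract_nonneg (1 / x), (Int.fract_lt_one (1 / x)).le⟩
  have huy := hf.lt_three_eighths (Int.fract_nonneg (1 / y)) (Int.fract_lt_one _)
  have hpy : (0 : ℝ) < 4 ^ (-⌊1 / y⌋) := by positivity
  rw [hf.2.1 x hx (hxy.le.trans hy), hf.2.1 y hy0 hy]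
  rcases (Int.floor_mono hinv.le).eq_or_lt with hfloor | hfloor
  · have hfract : Int.fract (1 / y) < Int.fract (1 / x) := by
      rw [Int.fract, Int.fract, hfloor]; linarith
    have hu := ih _ _ ?_ (Int.fract_nonneg _) hfract (Int.fract_lt_one _).le
    · rw [hfloor] at hpy ⊢
      nlinarith
    · have := Rat.den_fract_one_div_eq_num hx
      have := Rat.den_fract_one_div_eq_num hy0
      have := Rat.num_lt_denom_iff.mpr (hxy.trans_le hy |>.trans one_half_lt_one)
      have := Rat.num_lt_denom_iff.mpr (hy.trans_lt one_half_lt_one)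
      omega
  · have hpx : (4 : ℝ) ^ (-⌊1 / x⌋) ≤ 4 ^ (-⌊1 / y⌋) / 4 :=
      calc (4 : ℝ) ^ (-⌊1 / x⌋) ≤ 4 ^ (-⌊1 / y⌋ + -1) :=
            zpow_le_zpow_right₀ (by norm_num) (by omega)
        _ = 4 ^ (-⌊1 / y⌋) / 4 := by rw [zpow_add₀ (by norm_num)]; norm_num [div_eq_mul_inv]
    have hpx0 : (0 : ℝ) < 4 ^ (-⌊1 / x⌋) := by positivity
    nlinarith [mul_nonneg hpx0.le hux.1, mul_pos hpy (sub_pos.2 huy)]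

theorem strictMonoOn (hf : InterrobangEq f) : StrictMonoOn f (Icc 0 1) := by
  suffices ∀ N : ℕ, ∀ x y : ℚ, x.den + y.den = N → 0 ≤ x → x < y → y ≤ 1 → f x < f y from
    fun x hx y hy hxy ↦ this _ x y rfl hx.1 hxy hy.2
  intro N
  induction N using Nat.strong_induction_on with
  | _ N ih =>
  rintro x y hN hx hxy hy
  replace ih : ∀ x y : ℚ, x.den + y.den < N → 0 ≤ x → x < y → y ≤ 1 → f x < f y :=
    fun x y h ↦ ih _ h x y rfl
  rcases le_or_gt y (1 / 2) with hy2 | hy2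
  · exact hf.lt_of_lt_of_le_half ih hN.le hx hxy hy2
  rcases le_or_gt x (1 / 2) with hx2 | hx2
  · linarith [hf.le_one_sixteenth hx hx2, hf.one_sixteenth_lt hy2 hy]
  have hx0 : 0 < x := by linarith
  have hy0 : 0 < y := by linarith
  have hv : f (1 / y - 1) < f (1 / x - 1) := by
    refine ih _ _ ?_ (one_div_sub_one_mem_Ico hy2 hy).1
      (by linarith [one_div_lt_one_div_of_lt hx0 hxy])
      (one_div_sub_one_mem_Ico hx2 (by linarith)).2.le
    have := Rat.den_one_div_sub_one_eq_num hx0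
    have := Rat.den_one_div_sub_one_eq_num hy0
    have := Rat.num_lt_denom_iff.mpr (hxy.trans_le hy)
    have := Rat.num_le_denom_iff.mpr hy
    omega
  have hw : f (1 - y) < f (1 - x) :=
    hf.lt_of_lt_of_le_half ih (by simp [← hN, add_comm]) (by linarith) (by linarith) (by linarith)
  rw [hf.2.2 x hx2 (by linarith), hf.2.2 y hy2 hy]
  linarith

theorem jumpLE_one_div_add (hf : InterrobangEq f) {n : ℤ} (hn : 2 ≤ n) {B t : ℝ}
    (ht : t ∈ Ioo 0 1) (h : JumpLE f B t) : JumpLE f (2 * 4 ^ (-n) * B) (1 / (n + t)) := by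
  intro ε hε
  obtain ⟨a, b, ha, -, -, hat, htb, hb, hab⟩ :=
    h.exists_bracket_within hf.strictMonoOn.monotoneOn ht.1 ht.2 hε
  have hb0 : (0 : ℚ) < b := by exact_mod_cast ht.1.trans htb
  have hb1 : b < 1 := by exact_mod_cast hb
  have hnQ : (2 : ℚ) ≤ n := by exact_mod_cast hn
  have hnR : (2 : ℝ) ≤ n := by exact_mod_cast hn
  refine ⟨1 / (n + b), 1 / (n + a), div_nonneg zero_le_one (by linarith),
    (div_le_one (by linarith)).mpr (by linarith), ?_, ?_, ?_⟩
  · push_cast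
    exact one_div_lt_one_div_of_lt (by linarith [ht.1]) (by linarith)
  · push_cast
    exact one_div_lt_one_div_of_lt (by linarith [(Rat.cast_nonneg.mpr ha : (0 : ℝ) ≤ a)])
      (by linarith)
  · rw [hf.apply_one_div_add hn hb0.le hb1,
      hf.apply_one_div_add hn ha (by exact_mod_cast hat.trans ht.2)]
    have hp : (0 : ℝ) < 4 ^ (-n) := by positivity
    have hp16 := zpow_neg_le_one_sixteenth hn
    nlinarith [mul_lt_mul_of_pos_left hab (by positivity : (0 : ℝ) < 2 * 4 ^ (-n))]

theorem sub_le_of_half_lt (hf : InterrobangEq f) {p q r s : ℚ} (hp : 0 ≤ p) (hq : q ∈ Icc 0 1)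
    (hr : 0 ≤ r) (hs : s < 1 / 2)
    (hab : max (1 / (1 + q)) (1 - s) ≤ min (1 / (1 + p)) (1 - r)) :
    f (min (1 / (1 + p)) (1 - r)) - f (max (1 / (1 + q)) (1 - s)) ≤
      3 / 4 * (f q - f p) + 1 / 2 * (f s - f r) := by
  set a := max (1 / (1 + q)) (1 - s)
  set b := min (1 / (1 + p)) (1 - r)
  have hqa : 1 / (1 + q) ≤ a := le_max_left _ _
  have hsa : 1 - s ≤ a := le_max_right _ _
  have hbp : b ≤ 1 / (1 + p) := min_le_left _ _
  have hbr : b ≤ 1 - r := min_le_right _ _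
  have hb1 : b ≤ 1 := hbp.trans ((div_le_one (by linarith)).mpr (by linarith))
  have ha : 1 / 2 < a := by linarith
  have hpb : p ≤ 1 / b - 1 := by
    have := one_div_le_one_div_of_le (by linarith) hbp
    rw [one_div_one_div] at this
    linarith
  have haq : 1 / a - 1 ≤ q := by
    have := one_div_le_one_div_of_le (div_pos one_pos (by linarith [hq.1])) hqa
    rw [one_div_one_div] at this
    linarith
  have hva := (one_div_sub_one_mem_Ico ha (hab.trans hb1)).1
  have hvb := (one_div_sub_one_mem_Ico (ha.trans_le hab) hb1).2.le
  have hmono := hf.strictMonoOn.monotoneOn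
  have hv₁ := hmono ⟨hva, haq.trans hq.2⟩ hq haq
  have hv₂ := hmono ⟨hp, hpb.trans hvb⟩ ⟨hp.trans hpb, hvb⟩ hpb
  have hw₁ := hmono ⟨by linarith, by linarith⟩ ⟨by linarith, by linarith⟩
    (by linarith : 1 - a ≤ s)
  have hw₂ := hmono ⟨hr, by linarith⟩ ⟨by linarith, by linarith⟩ (by linarith : r ≤ 1 - b)
  rw [hf.2.2 a ha (hab.trans hb1), hf.2.2 b (ha.trans_le hab) hb1]
  linarith

theorem jumpLE_of_half_lt (hf : InterrobangEq f) {B C z : ℝ} (hz : z ∈ Ioo (1 / 2) 1)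
    (hv : JumpLE f B (1 / z - 1)) (hw : JumpLE f C (1 - z)) :
    JumpLE f (3 / 4 * B + 1 / 2 * C) z := by
  intro ε hε
  have hz0 : 0 < z := by linarith [hz.1]
  obtain ⟨hv0, hv1⟩ := one_div_sub_one_mem_Ioo hz.1 hz.2
  have hmono := hf.strictMonoOn.monotoneOn
  obtain ⟨p, q, hp, -, -, hpv, hvq, hq, hpq⟩ :=
    hv.exists_bracket_within hmono hv0 hv1 (half_pos hε)
  obtain ⟨r, s, hr, -, -, hrw, hws, hs, hrs⟩ := hw.exists_bracket_within hmono
    (by linarith [hz.2] : (0 : ℝ) < 1 - z) (by linarith [hz.1] : 1 - z < 1 / 2) (half_pos hε)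
  have hp0 : (0 : ℝ) ≤ p := by exact_mod_cast hp
  have haz : ((max (1 / (1 + q)) (1 - s) : ℚ) : ℝ) < z := by
    push_cast
    refine max_lt ?_ (by linarith)
    rw [div_lt_iff₀ (by linarith)]
    rw [sub_lt_iff_lt_add, div_lt_iff₀ hz0] at hvq
    linarith
  have hzb : z < ((min (1 / (1 + p)) (1 - r) : ℚ) : ℝ) := by
    push_cast
    refine lt_min ?_ (by linarith)
    rw [lt_div_iff₀ (by linarith)]
    rw [lt_sub_iff_add_lt, lt_div_iff₀ hz0] at hpv
    linarith
  have hsQ : s < 1 / 2 := by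
    exact_mod_cast (hs.trans_eq (by norm_num) : (s : ℝ) < ((1 / 2 : ℚ) : ℝ))
  have hfab := hf.sub_le_of_half_lt hp
    ⟨by exact_mod_cast (hv0.trans hvq).le, by exact_mod_cast hq.le⟩ hr hsQ
    (by exact_mod_cast (haz.trans hzb).le)
  exact ⟨_, _, le_max_of_le_right (by linarith), min_le_of_left_le
    ((div_le_one (by linarith)).mpr (by linarith)), haz, hzb, by linarith⟩

theorem exists_apply_lt (hf : InterrobangEq f) {ε : ℝ} (hε : 0 < ε) :
    ∃ c : ℚ, 0 < c ∧ c < 1 ∧ f c < ε := by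
  obtain ⟨k, hk⟩ := exists_pow_lt_of_lt_one hε (by norm_num : (1 / 4 : ℝ) < 1)
  have hk2 : (2 : ℚ) ≤ (k + 2 : ℤ) := by push_cast; linarith [k.cast_nonneg (α := ℚ)]
  refine ⟨1 / (k + 2 : ℤ), by positivity, (div_lt_one (by linarith)).mpr (by linarith), ?_⟩
  rw [hf.apply_one_div (by omega)]
  calc (4 : ℝ) ^ (-(k + 2 : ℤ)) ≤ 4 ^ (-(k : ℤ)) :=
        zpow_le_zpow_right₀ (by norm_num) (by omega)
    _ = (1 / 4) ^ k := by rw [zpow_neg, zpow_natCast, one_div, inv_pow]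
    _ < ε := hk

theorem three_eighths_sub_le (hf : InterrobangEq f) {c : ℚ} (hc0 : 0 < c) (hc1 : c < 1) :
    3 / 8 - 5 / 4 * f c ≤ f (1 / (1 + c)) := by
  have hw : f (1 - 1 / (1 + c)) ≤ f c := by
    have h : 1 - 1 / (1 + c) = c / (1 + c) := by field_simp; ring
    refine hf.strictMonoOn.monotoneOn ⟨?_, ?_⟩ ⟨hc0.le, hc1.le⟩ ?_ <;> rw [h]
    · positivity
    · rw [div_le_one (by positivity)]; linarith
    · rw [div_le_iff₀ (by positivity)]; nlinarith
  rw [hf.2.2 _ (by rw [lt_div_iff₀ (by positivity)]; linarith)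
    ((div_le_one (by positivity)).mpr (by linarith)), one_div_one_div, add_sub_cancel_left]
  linarith [(hf.mapsTo_Icc ⟨hc0.le, hc1.le⟩).1]

theorem exists_gt_one_div_apply_sub_lt (hf : InterrobangEq f) {n : ℤ} (hn : 2 ≤ n) {ε : ℝ}
    (hε : 0 < ε) : ∃ b : ℚ, 1 / (n : ℚ) < b ∧ b ≤ 1 ∧ f b - f (1 / n) < ε := by
  obtain ⟨c, hc0, hc1, hc⟩ := hf.exists_apply_lt hε
  have hd := hf.three_eighths_sub_le hc0 hc1
  have hfc0 := (hf.mapsTo_Icc ⟨hc0.le, hc1.le⟩).1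
  set d := 1 / (1 + c) with hd_def
  have hd0 : 0 < d := by positivity
  have hd1 : d < 1 := (div_lt_one (by linarith)).mpr (by linarith)
  rw [hf.apply_one_div hn]
  -- Just right of `1/n` lie the points `1/((n-1) + d)` with `d → 1⁻`; for `n = 2` these fall
  -- under the second rule. With `d = 1/(1+c)`, `f d` is controlled by `f c`.
  rcases hn.eq_or_lt with rfl | hn3
  · have hw : 1 - 1 / (1 + d) = 1 / ((2 : ℤ) + c) := by
      rw [hd_def]; field_simp; ring
    refine ⟨1 / (1 + d), by push_cast; gcongr; linarith,
      (div_le_one (by linarith)).mpr (by linarith), ?_⟩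
    rw [hf.2.2 _ (by rw [lt_div_iff₀ (by linarith)]; linarith)
      ((div_le_one (by linarith)).mpr (by linarith)), one_div_one_div, add_sub_cancel_left, hw,
      hf.apply_one_div_add le_rfl hc0.le hc1]
    norm_num
    linarith
  · have hnQ : (3 : ℚ) ≤ n := by exact_mod_cast hn3
    refine ⟨1 / ((n - 1 : ℤ) + d), ?_,
      (div_le_one (by push_cast; linarith)).mpr (by push_cast; linarith), ?_⟩
    · push_cast
      exact one_div_lt_one_div_of_lt (by linarith) (by linarith)
    rw [hf.apply_one_div_add (by omega) hd0.le hd1,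
      show -(n - 1) = -n + 1 by ring, zpow_add₀ (by norm_num), zpow_one]
    have hp : (0 : ℝ) < 4 ^ (-n) := by positivity
    have hp16 := zpow_neg_le_one_sixteenth hn
    nlinarith [mul_le_mul_of_nonneg_left hd hp.le, mul_le_mul_of_nonneg_right hp16 hfc0]

theorem jumpLE_zero_one_div (hf : InterrobangEq f) {n : ℤ} (hn : 2 ≤ n) :
    JumpLE f 0 (1 / (n : ℝ)) := by
  intro ε hε
  obtain ⟨c, hc0, hc1, hc⟩ := hf.exists_apply_lt (half_pos hε)
  obtain ⟨b, hb, hb1, hfb⟩ := hf.exists_gt_one_div_apply_sub_lt hn (half_pos hε)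
  have hnQ : (2 : ℚ) ≤ n := by exact_mod_cast hn
  refine ⟨1 / (n + c), b, div_nonneg zero_le_one (by linarith), hb1, ?_, ?_, ?_⟩
  · push_cast
    exact one_div_lt_one_div_of_lt (by exact_mod_cast (by linarith : (0 : ℚ) < n))
      (by linarith [(Rat.cast_pos.mpr hc0 : (0 : ℝ) < c)])
  · exact_mod_cast hb
  · rw [hf.apply_one_div_add hn hc0.le hc1]
    rw [hf.apply_one_div hn] at hfb
    have hp : (0 : ℝ) < 4 ^ (-n) := by positivity
    have hp16 := zpow_neg_le_one_sixteenth hn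
    nlinarith [(hf.mapsTo_Icc ⟨hc0.le, hc1.le⟩).1]

theorem jumpLE_of_le_half (hf : InterrobangEq f) {B : ℝ} (hB0 : 0 ≤ B)
    (hB : ∀ t ∈ Ioo (0 : ℝ) 1, JumpLE f B t) {z : ℝ} (hz0 : 0 < z) (hz : z ≤ 1 / 2) :
    JumpLE f (B / 8) z := by
  have hn := two_le_floor_one_div hz0 hz
  have hz_eq : z = 1 / (⌊1 / z⌋ + Int.fract (1 / z)) := by
    rw [Int.floor_add_fract, one_div_one_div]
  rcases (Int.fract_nonneg (1 / z)).eq_or_lt with h0 | h0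
  · rw [← h0, add_zero] at hz_eq
    rw [hz_eq]
    exact (hf.jumpLE_zero_one_div hn).mono (by positivity)
  · have ht : Int.fract (1 / z) ∈ Ioo 0 1 := ⟨h0, Int.fract_lt_one _⟩
    rw [hz_eq]
    refine (hf.jumpLE_one_div_add hn ht (hB _ ht)).mono ?_
    have hp : (0 : ℝ) < 4 ^ (-⌊1 / z⌋) := by positivity
    nlinarith [zpow_neg_le_one_sixteenth hn]

theorem jumpLE_contract (hf : InterrobangEq f) {B : ℝ} (hB0 : 0 ≤ B)
    (hB : ∀ z ∈ Ioo (0 : ℝ) 1, JumpLE f B z) :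
    ∀ z ∈ Ioo (0 : ℝ) 1, JumpLE f (13 / 16 * B) z := by
  rintro z ⟨hz0, hz1⟩
  rcases le_or_gt z (1 / 2) with hz | hz
  · exact (hf.jumpLE_of_le_half hB0 hB hz0 hz).mono (by linarith)
  refine (hf.jumpLE_of_half_lt ⟨hz, hz1⟩ (hB _ (one_div_sub_one_mem_Ioo hz hz1))
    (hf.jumpLE_of_le_half hB0 hB (by linarith) (by linarith))).mono (by linarith)

theorem jumpLE_zero (hf : InterrobangEq f) {z : ℝ} (hz : z ∈ Ioo (0 : ℝ) 1) :
    JumpLE f 0 z := by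
  have hk : ∀ k : ℕ, ∀ z ∈ Ioo (0 : ℝ) 1, JumpLE f ((13 / 16) ^ k * (3 / 8)) z := by
    intro k
    induction k with
    | zero =>
      intro z hz ε hε
      exact ⟨0, 1, le_rfl, le_rfl, by simpa using hz.1, by simpa using hz.2,
        by simp [hf.1, hf.apply_one, hε]⟩
    | succ k ih =>
      simpa [pow_succ, mul_assoc, mul_comm, mul_left_comm] using
        hf.jumpLE_contract (by positivity) ih
  intro ε hε
  obtain ⟨k, hk'⟩ := exists_pow_lt_of_lt_one (half_pos hε) (by norm_num : (13 / 16 : ℝ) < 1)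
  obtain ⟨a, b, ha, hb, haz, hzb, hab⟩ := hk k z hz (ε / 2) (half_pos hε)
  exact ⟨a, b, ha, hb, haz, hzb, by nlinarith⟩

theorem exists_Icc_mem_nhdsWithin (hf : InterrobangEq f) {z : ℝ} (hz : z ∈ Icc (0 : ℝ) 1)
    {ε : ℝ} (hε : 0 < ε) : ∃ a b : ℚ, a ∈ Icc 0 1 ∧ b ∈ Icc 0 1 ∧
      Icc (a : ℝ) b ∈ 𝓝[Icc 0 1] z ∧ f b - f a < ε := by
  rcases hz.1.eq_or_lt with rfl | hz0
  · obtain ⟨c, hc0, hc1, hc⟩ := hf.exists_apply_lt hε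
    refine ⟨0, c, ⟨le_rfl, zero_le_one⟩, ⟨hc0.le, hc1.le⟩, ?_, by rwa [hf.1, sub_zero]⟩
    exact nhdsWithin_mono _ Icc_subset_Ici_self
      (by exact_mod_cast Icc_mem_nhdsGE (by exact_mod_cast hc0))
  rcases hz.2.eq_or_lt with rfl | hz1
  · obtain ⟨c, hc0, hc1, hc⟩ := hf.exists_apply_lt (half_pos hε)
    have hd1 : 1 / (1 + c) < 1 := (div_lt_one (by linarith)).mpr (by linarith)
    refine ⟨1 / (1 + c), 1, ⟨by positivity, hd1.le⟩, ⟨zero_le_one, le_rfl⟩, ?_, ?_⟩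
    · exact nhdsWithin_mono _ Icc_subset_Iic_self
        (by exact_mod_cast Icc_mem_nhdsLE (by exact_mod_cast hd1))
    · linarith [hf.three_eighths_sub_le hc0 hc1, hf.apply_one]
  obtain ⟨a, b, ha, hb, haz, hzb, hab⟩ := hf.jumpLE_zero ⟨hz0, hz1⟩ ε hε
  exact ⟨a, b, ⟨ha, by exact_mod_cast (haz.trans hz1).le⟩,
    ⟨by exact_mod_cast (hz0.trans hzb).le, hb⟩, mem_nhdsWithin_of_mem_nhds (Icc_mem_nhds haz hzb),
    by linarith⟩

end InterrobangEq

theorem interrobang_uniformContinuous_and_extends (f : ℚ → ℝ) (hf : InterrobangEq f) :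
    UniformContinuousOn f (Set.Icc (0:ℚ) 1) ∧
    ∃ g : ℝ → ℝ,
      (ContinuousOn g (Set.Icc (0:ℝ) 1) ∧ StrictMonoOn g (Set.Icc (0:ℝ) 1) ∧
        ∀ q : ℚ, q ∈ Set.Icc (0:ℚ) 1 → g (q : ℝ) = f q) ∧
      ∀ g' : ℝ → ℝ,
        (ContinuousOn g' (Set.Icc (0:ℝ) 1) ∧ StrictMonoOn g' (Set.Icc (0:ℝ) 1) ∧
          ∀ q : ℚ, q ∈ Set.Icc (0:ℚ) 1 → g' (q : ℝ) = f q) →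
        Set.EqOn g g' (Set.Icc (0:ℝ) 1) := by
  have hmono := hf.strictMonoOn
  have hcont : ContinuousOn (ratExtend f) (Icc 0 1) :=
    continuousOn_ratExtend hmono.monotoneOn fun z hz ε hε ↦ hf.exists_Icc_mem_nhdsWithin hz hε
  have hrat : ∀ q ∈ Icc (0 : ℚ) 1, ratExtend f q = f q :=
    fun q hq ↦ ratExtend_ratCast hmono.monotoneOn hq
  refine ⟨uniformContinuousOn_of_continuousOn_extension hcont hrat,
    ratExtend f, ⟨hcont, strictMonoOn_ratExtend hmono, hrat⟩, ?_⟩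
  rintro g' ⟨hg', -, hg'f⟩
  exact eqOn_Icc_of_forall_ratCast_eq hcont hg' fun q hq ↦ (hrat q hq).trans (hg'f q hq).symm
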